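/- Let s ∈ (0,1] satisfy −ψ'(s) = 4δ for some δ ≥ 0, where ψ is the kernel function ψ(t) = (1/2)(2t² + 1/t² − 5) + e^{1/t−1}. Then ψ''(s) ≤ 6 + 2(6δ + 1)(1 + log(4δ + 1))². -/
import Mathlib


noncomputable def psi' (t : ℝ) : ℝ := 2*t - 1/t^3 - (1/t^2) * Real.exp (1/t - 1)

noncomputable def psi'' (t : ℝ) : ℝ :=
  2 + 3/t^4 + (2/t^3 + 1/t^4) * Real.exp (1/t - 1)

theorem stmt_16 (s δ : ℝ) (hs : s ∈ Set.Ioc (0:ℝ) 1) (hδ : 0 ≤ δ)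
    (h : -psi' s = 4 * δ) :
    psi'' s ≤ 6 + 2 * (6 * δ + 1) * (1 + Real.log (4 * δ + 1))^2 := by
  obtain ⟨hs0, hs1⟩ := hs
  have hs0' : s ≠ 0 := ne_of_gt hs0
  set L : ℝ := 1 + Real.log (4*δ+1) with hLdef
  have h4 : (0:ℝ) < 4*δ+1 := by linarith
  have hlog : 0 ≤ Real.log (4*δ+1) := Real.log_nonneg (by linarith)
  have hL1 : 1 ≤ L := by simp only [hLdef]; linarith
  set E : ℝ := Real.exp (1/s - 1) with hEdef
  have key : -(2*s) + 1/s^3 + (1/s^2)*E = 4*δ := by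
    unfold psi' at h; rw [← hEdef] at h; linarith
  have hEeq : E = 4*δ*s^2 + 2*s^3 - 1/s := by
    field_simp at key ⊢
    nlinarith [key, sq_nonneg s, mul_pos hs0 hs0]
  have h1s : (1/s) * s = 1 := by field_simp
  have hinv1 : 1 ≤ 1/s := by rw [le_div_iff₀ hs0]; linarith
  have hEle : E ≤ 4*δ + 1 := by
    rw [hEeq]
    have hs2 : s^2 ≤ 1 := by nlinarith
    have hs3 : s^3 ≤ 1 := by nlinarith
    have hd : 4*δ*s^2 ≤ 4*δ := by nlinarith [mul_nonneg hδ (sub_nonneg.2 hs2)]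
    linarith
  have hinv : 1/s ≤ L := by
    have h1 : 1/s - 1 ≤ Real.log (4*δ+1) := by
      have := Real.log_le_log (Real.exp_pos (1/s - 1)) hEle
      rwa [Real.log_exp] at this
    linarith
  have hinv2 : 1/s^2 ≤ L^2 := by
    rw [show (1:ℝ)/s^2 = (1/s)^2 by ring]
    exact pow_le_pow_left₀ (by positivity) hinv 2
  have h45 : 1/s^4 ≤ 1/s^5 := by
    rw [show (1:ℝ)/s^4 = (1/s)^4 by ring, show (1:ℝ)/s^5 = (1/s)^5 by ring]
    exact pow_le_pow_right₀ hinv1 (by norm_num)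
  have hpsi : psi'' s = 6 + 1/s^4 - 1/s^5 + (8*δ+2)/s + 4*δ/s^2 := by
    unfold psi''
    rw [← hEdef, hEeq]
    field_simp
    ring
  rw [hpsi]
  have hb1 : (8*δ+2)/s ≤ (8*δ+2)*L := by
    rw [div_eq_mul_one_div]
    exact mul_le_mul_of_nonneg_left hinv (by linarith)
  have hb2 : 4*δ/s^2 ≤ 4*δ*L^2 := by
    rw [div_eq_mul_one_div]
    exact mul_le_mul_of_nonneg_left hinv2 (by linarith)
  have hLL : (8*δ+2)*L ≤ (8*δ+2)*L^2 := by
    nlinarith [mul_nonneg (mul_nonneg (by linarith : (0:ℝ) ≤ 8*δ+2)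
      (by linarith : (0:ℝ) ≤ L)) (by linarith : (0:ℝ) ≤ L - 1)]
  clear_value L E
  linarith [hb1, hb2, hLL, h45]
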